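/- arXiv:1506.03553 — 3 statements merged into one kernel-verified Lean document; each statement's English description precedes it below -/
import Mathlib

section
/- In a labelled transition system with states S, if a state s satisfies EF EG p (there exists a path from s reaching a state from which some infinite path stays forever in the set of states satisfying p), and s does not satisfy EF AG p (no reachable state has all its infinite paths remaining in p), then s satisfies EF EG (p ∧ EF ¬p), i.e., one can reach a state from which there is an infinite path staying in p, while every state on a path staying in p can still reach a ¬p state. -/
/-- `EF r p s`: some state reachable from `s` (refl-trans closure of `r`) satisfies `p`. -/
def EF {S : Type*} (r : S → S → Prop) (p : S → Prop) (s : S) : Prop :=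
  ∃ t, Relation.ReflTransGen r s t ∧ p t

/-- `EG r p s`: there is an infinite path from `s` all of whose states satisfy `p`. -/
def EG {S : Type*} (r : S → S → Prop) (p : S → Prop) (s : S) : Prop :=
  ∃ π : ℕ → S, π 0 = s ∧ (∀ n, r (π n) (π (n + 1))) ∧ ∀ n, p (π n)

/-- `AG r p s`: all states reachable from `s` satisfy `p`. -/
def AG {S : Type*} (r : S → S → Prop) (p : S → Prop) (s : S) : Prop :=
  ∀ t, Relation.ReflTransGen r s t → p t

theorem stmt0 {S : Type*} (r : S → S → Prop) (p : S → Prop) (s : S)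
    (htotal : ∀ x : S, ∃ y, r x y)
    (h1 : EF r (EG r p) s)
    (h2 : ¬ EF r (AG r p) s) :
    EF r (EG r (fun t => p t ∧ EF r (fun u => ¬ p u) t)) s := by
  obtain ⟨t, hst, π, hπ0, hstep, hp⟩ := h1
  -- each π n is reachable from t
  have hreach : ∀ n, Relation.ReflTransGen r t (π n) := by
    intro n
    induction n with
    | zero => rw [hπ0]
    | succ k ih => exact ih.tail (hstep k)
  refine ⟨t, hst, π, hπ0, hstep, fun n => ⟨hp n, ?_⟩⟩
  -- π n is reachable from s, so ¬ AG p (π n), giving EF ¬p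
  have hsn : Relation.ReflTransGen r s (π n) := hst.trans (hreach n)
  have : ¬ AG r p (π n) := fun hAG => h2 ⟨π n, hsn, hAG⟩
  simp only [AG, not_forall] at this
  obtain ⟨u, hu, hnu⟩ := this
  exact ⟨u, hu, hnu⟩
end

section
/- Consider a timed automaton as a set of locations with a single clock, where every cycle in the location graph contains an edge whose guard requires the clock to be at least a strictly positive constant e and which resets the clock. Then every infinite run that visits infinitely many edges which lie on cycles takes infinite total time; in particular, no Zeno run (infinitely many discrete transitions in finite total time) exists if every edge belongs to some cycle with such a guard-and-reset. -/
open scoped NNReal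

/-- A finite directed graph of locations: finitely many vertices and edges. -/
structure FinDigraph where
  V : Type
  E : Type
  finV : Fintype V
  finE : Fintype E
  src : E → V
  tgt : E → V

/-- A nonempty closed walk (cycle) of length `n`: consecutive edges compose cyclically. -/
def FinDigraph.IsClosedWalk (G : FinDigraph) {n : ℕ} (hn : 0 < n) (c : Fin n → G.E) : Prop :=
  ∀ i : Fin n, G.tgt (c i) = G.src (c ⟨(i.val + 1) % n, Nat.mod_lt _ hn⟩)

/-- An infinite walk through the location graph. -/
def FinDigraph.IsInfWalk (G : FinDigraph) (w : ℕ → G.E) : Prop :=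
  ∀ n, G.tgt (w n) = G.src (w (n + 1))

/-- An infinite run of a one-clock timed automaton along the infinite walk `w`,
alternating delays `d` and discrete steps.  `c n` is the clock value when edge `w n`
is taken (after the delay `d n`); edges in `R` carry the guard `x ≥ e` and reset the clock. -/
structure IsRun (G : FinDigraph) (R : Set G.E) (e : ℝ≥0)
    (w : ℕ → G.E) (d : ℕ → ℝ≥0) (c : ℕ → ℝ≥0) : Prop where
  walk : G.IsInfWalk w
  init : c 0 = d 0
  step_reset : ∀ n, w n ∈ R → c (n + 1) = d (n + 1)
  step_noreset : ∀ n, w n ∉ R → c (n + 1) = c n + d (n + 1)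
  guard : ∀ n, w n ∈ R → e ≤ c n

/-!
By pigeonhole, any stretch of `|E| + 1` steps of an infinite walk repeats an edge, and the
segment between the two occurrences is a cycle, hence contains a guard-and-reset edge. So resets
happen infinitely often. Between two consecutive resets the clock starts from zero and must reach
`e` to pass the second guard, so each such stretch consumes at least `e` time units.
-/

open Filter Finset

namespace FinDigraph.IsInfWalk

variable {G : FinDigraph} {w : ℕ → G.E}

theorem isClosedWalk_segment (hw : G.IsInfWalk w) {i j : ℕ} (hij : i < j) (heq : w i = w j) :
    G.IsClosedWalk (Nat.sub_pos_of_lt hij) (fun k : Fin (j - i) => w (i + k)) := by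
  intro k
  by_cases hk : k.val + 1 < j - i
  · simpa only [Nat.mod_eq_of_lt hk, add_assoc] using hw (i + k)
  · have hwrap : (k.val + 1) % (j - i) = 0 := by rw [show k.val + 1 = j - i by omega, Nat.mod_self]
    have hlast : i + k + 1 = j := by omega
    simpa only [hwrap, add_zero, heq, hlast] using hw (i + k)

theorem frequently_mem {R : Set G.E} (hw : G.IsInfWalk w)
    (hcyc : ∀ (n : ℕ) (hn : 0 < n) (cyc : Fin n → G.E),
      G.IsClosedWalk hn cyc → ∃ i : Fin n, cyc i ∈ R) :
    ∃ᶠ n in atTop, w n ∈ R := by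
  have := G.finE
  rw [frequently_atTop]
  intro N
  obtain ⟨i, j, hne, heq⟩ := Finite.exists_ne_map_eq_of_infinite fun k => w (N + k)
  wlog hij : i < j generalizing i j
  · exact this j i hne.symm heq.symm (by omega)
  obtain ⟨k, hk⟩ := hcyc _ _ _ (hw.isClosedWalk_segment (by omega : N + i < N + j) heq)
  exact ⟨N + i + k, by omega, hk⟩

end FinDigraph.IsInfWalk

namespace IsRun

variable {G : FinDigraph} {R : Set G.E} {e : ℝ≥0} {w : ℕ → G.E} {d c : ℕ → ℝ≥0}

theorem clock_le_sum_Ico_of_mem (hrun : IsRun G R e w d c) {j : ℕ} (hj : w j ∈ R) :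
    ∀ n, j + 1 ≤ n → c n ≤ ∑ k ∈ Ico (j + 1) (n + 1), d k := by
  refine Nat.le_induction ?_ fun n hn ih => ?_
  · simp [hrun.step_reset j hj]
  · rw [sum_Ico_succ_top (by omega)]
    by_cases hr : w n ∈ R
    · rw [hrun.step_reset n hr]
      exact le_add_self
    · rw [hrun.step_noreset n hr]
      gcongr

theorem le_sum_Ico_of_mem (hrun : IsRun G R e w d c) {i j : ℕ} (hij : i < j)
    (hi : w i ∈ R) (hj : w j ∈ R) : e ≤ ∑ k ∈ Ico (i + 1) (j + 1), d k :=
  (hrun.guard j hj).trans (hrun.clock_le_sum_Ico_of_mem hi j hij)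

theorem nsmul_le_sum_range (hrun : IsRun G R e w d c) {φ : ℕ → ℕ} (hφ : StrictMono φ)
    (hR : ∀ m, w (φ m) ∈ R) (m : ℕ) : m • e ≤ ∑ k ∈ range (φ m + 1), d k := by
  induction m with
  | zero => exact zero_le
  | succ m ih =>
    rw [succ_nsmul, ← sum_range_add_sum_Ico d (Nat.succ_le_succ (hφ m.lt_succ_self).le)]
    exact add_le_add ih (hrun.le_sum_Ico_of_mem (hφ m.lt_succ_self) (hR m) (hR (m + 1)))

end IsRun

theorem stmt3_general (G : FinDigraph) (R : Set G.E) (e : ℝ≥0) (he : 0 < e)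
    (hcyc : ∀ (n : ℕ) (hn : 0 < n) (cyc : Fin n → G.E),
      G.IsClosedWalk hn cyc → ∃ i : Fin n, cyc i ∈ R)
    (w : ℕ → G.E) (d : ℕ → ℝ≥0) (c : ℕ → ℝ≥0)
    (hrun : IsRun G R e w d c) :
    ∀ C : ℝ≥0, ∃ N : ℕ, C < ∑ k ∈ Finset.range N, d k := by
  intro C
  obtain ⟨φ, hφ, hR⟩ := extraction_of_frequently_atTop (hrun.walk.frequently_mem hcyc)
  obtain ⟨m, hm⟩ := exists_lt_nsmul he C
  exact ⟨φ m + 1, hm.trans_le (hrun.nsmul_le_sum_range hφ hR m)⟩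

/-- Every cycle contains a guard-and-reset edge (guard `x ≥ e` with `e > 0`, resetting the
clock), and every edge belongs to some cycle.  Then the total time of any infinite run
diverges: no Zeno run exists. -/
theorem stmt3 (G : FinDigraph) (R : Set G.E) (e : ℝ≥0) (he : 0 < e)
    (hcyc : ∀ (n : ℕ) (hn : 0 < n) (cyc : Fin n → G.E),
      G.IsClosedWalk hn cyc → ∃ i : Fin n, cyc i ∈ R)
    (hedge : ∀ a : G.E, ∃ (n : ℕ) (hn : 0 < n) (cyc : Fin n → G.E),
      G.IsClosedWalk hn cyc ∧ ∃ i : Fin n, cyc i = a)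
    (w : ℕ → G.E) (d : ℕ → ℝ≥0) (c : ℕ → ℝ≥0)
    (hrun : IsRun G R e w d c) :
    ∀ C : ℝ≥0, ∃ N : ℕ, C < ∑ k ∈ Finset.range N, d k :=
  stmt3_general G R e he hcyc w d c hrun
end

section
/- In a finite transition system with total transition relation, a state t satisfies EG p if and only if there is a lasso from t within p: a finite path from t, all of whose states satisfy p, ending at a state u from which there is a nonempty cycle through states all satisfying p returning to u. -/
/-- A lasso within `p` from `t`: a finite path from `t` inside `p` ending at a state
from which there is a nonempty cycle inside `p` back to that state. -/
def LassoWithin {S : Type*} (r : S → S → Prop) (p : S → Prop) (t : S) : Prop :=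
  ∃ (k : ℕ) (v : ℕ → S), v 0 = t ∧ (∀ i < k, r (v i) (v (i + 1))) ∧ (∀ i ≤ k, p (v i)) ∧
    ∃ (j : ℕ), 0 < j ∧ ∃ w : ℕ → S, w 0 = v k ∧ w j = v k ∧
      (∀ i < j, r (w i) (w (i + 1))) ∧ ∀ i ≤ j, p (w i)

theorem stmt11 {S : Type*} [Fintype S] (r : S → S → Prop)
    (htotal : ∀ x : S, ∃ y, r x y) (p : S → Prop) (t : S) :
    EG r p t ↔ LassoWithin r p t := by
  constructor
  · rintro ⟨π, hπ0, hπr, hπp⟩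
    obtain ⟨a, b, hab, heq⟩ : ∃ a b : ℕ, a ≠ b ∧ π a = π b :=
      Finite.exists_ne_map_eq_of_infinite π
    wlog hlt : a < b generalizing a b
    · exact this b a hab.symm heq.symm (by omega)
    refine ⟨a, π, hπ0, fun i _ => hπr i, fun i _ => hπp i,
      b - a, by omega, fun i => π (a + i), by simp, ?_, ?_, fun i _ => hπp _⟩
    · show π (a + (b - a)) = π a
      rw [show a + (b - a) = b by omega]; exact heq.symm
    · intro i _
      show r (π (a + i)) (π (a + (i + 1)))
      rw [show a + (i + 1) = a + i + 1 by omega]; exact hπr _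
  · rintro ⟨k, v, hv0, hvr, hvp, j, hj, w, hw0, hwj, hwr, hwp⟩
    refine ⟨fun n => if n < k then v n else w ((n - k) % j), ?_, ?_, ?_⟩
    · simp only []
      split
      · exact hv0
      · have : k = 0 := by omega
        simp [this, hw0, hv0]
    · intro n
      simp only []
      by_cases h1 : n < k
      · rw [if_pos h1]
        by_cases h2 : n + 1 < k
        · rw [if_pos h2]; exact hvr n h1
        · have hk : n + 1 = k := by omega
          rw [if_neg h2, show n + 1 - k = 0 by omega, Nat.zero_mod, hw0, ← hk]
          exact hvr n h1
      · rw [if_neg h1, if_neg (by omega)]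
        set m := (n - k) % j with hm
        have hmlt : m < j := Nat.mod_lt _ hj
        have hstep : (n + 1 - k) % j = (m + 1) % j := by
          rw [show n + 1 - k = (n - k) + 1 by omega, hm, Nat.mod_add_mod]
        rw [hstep]
        by_cases h3 : m + 1 < j
        · rw [Nat.mod_eq_of_lt h3]; exact hwr m hmlt
        · have : m + 1 = j := by omega
          rw [show (m + 1) % j = 0 by simp [this], hw0, ← hwj, ← this]
          exact hwr m hmlt
    · intro n
      simp only []
      split
      · exact hvp n (by omega)
      · exact hwp _ (le_of_lt (Nat.mod_lt _ hj))
end
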